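/- arXiv:math/0312120 — 7 statements merged into one kernel-verified Lean document; each statement's English description precedes it below -/
import Mathlib

section
/- Let A be a C*-algebra and p ∈ A a projection. Then the set A_p := {x ∈ A : ∃ k > 0, [[kp, x], [x*, kp]] ≥ 0 in M₂(A)} equals pAp = {pxp : x ∈ A}. -/
variable {A : Type*} [NonUnitalCStarAlgebra A]

open scoped CStarAlgebra

lemma aux_zero {u v : A} (h : star u * u + star v * v = 0) : u = 0 := by
  let _ := CStarAlgebra.spectralOrder A⁺¹
  have _ := CStarAlgebra.spectralOrderedRing A⁺¹
  have h3 : star (u : A⁺¹) * u + star (v : A⁺¹) * v = 0 := by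
    simp only [← Unitization.inr_star, ← Unitization.inr_mul, ← Unitization.inr_add, h,
      Unitization.inr_zero]
  have h1 : (0 : A⁺¹) ≤ star (u : A⁺¹) * u := star_mul_self_nonneg _
  have h2 : (0 : A⁺¹) ≤ star (v : A⁺¹) * v := star_mul_self_nonneg _
  have h4 : star (u : A⁺¹) * u = 0 := by
    have : star (u : A⁺¹) * u = -(star (v : A⁺¹) * v) := by linear_combination (norm := abel) h3
    exact le_antisymm (this ▸ neg_nonpos_of_nonneg h2) h1
  have h5 : (u : A⁺¹) = 0 := by
    rwa [CStarRing.star_mul_self_eq_zero_iff] at h4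
  exact Unitization.inr_injective (R := ℂ) (h5.trans (Unitization.inr_zero ℂ).symm)

lemma aux_corner {p a b : A} (hp : IsSelfAdjoint p) (hp2 : p * p = p) {k : ℝ}
    (h : star a * a + star b * b = k • p) : a * p = a := by
  set u := a - a * p with hu
  set v := b - b * p with hv
  have key : star u * u + star v * v =
      (star a * a + star b * b) - (star a * a + star b * b) * p
        - p * (star a * a + star b * b) + p * ((star a * a + star b * b) * p) := by
    simp only [hu, hv, star_sub, star_mul, hp.star_eq]
    noncomm_ring
  rw [h] at key
  have key2 : star u * u + star v * v = 0 := by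
    rw [key]
    simp only [smul_mul_assoc, mul_smul_comm, hp2]
    abel
  have := aux_zero key2
  rw [hu, sub_eq_zero] at this
  exact this.symm

/-- nonneg smul of nonneg in a star-ordered algebra over ℝ -/
lemma aux_smul_nonneg {B : Type*} [CStarAlgebra B] [PartialOrder B] [StarOrderedRing B]
    {r : ℝ} (hr : 0 ≤ r) {b : B} (hb : 0 ≤ b) : 0 ≤ r • b := by
  have : r • b = star (Real.sqrt r • (1 : B)) * b * (Real.sqrt r • (1 : B)) := by
    simp only [star_smul, star_one, star_trivial, smul_mul_assoc, mul_smul_comm, one_mul,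
      mul_one, smul_smul, Real.mul_self_sqrt hr]
  rw [this]
  exact star_left_conjugate_nonneg hb _

/-- key positivity : quasispectrum of k•p - k⁻¹•(star a * a) is nonneg -/
lemma aux_qs {p a : A} (hp : IsSelfAdjoint p) (hp2 : p * p = p)
    (hpa : p * a = a) (hap : a * p = a) :
    ∀ t ∈ quasispectrum ℝ ((‖star a * a‖.sqrt + 1) • p
      - (‖star a * a‖.sqrt + 1)⁻¹ • (star a * a)), 0 ≤ t := by
  set N : ℝ := ‖star a * a‖ with hN
  set k : ℝ := N.sqrt + 1 with hk
  have hk0 : 0 < k := by positivity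
  intro t ht
  rw [Unitization.quasispectrum_eq_spectrum_inr' ℝ ℂ] at ht
  let _ := CStarAlgebra.spectralOrder A⁺¹
  have _ := CStarAlgebra.spectralOrderedRing A⁺¹
  set P : A⁺¹ := (p : A⁺¹) with hP
  set S : A⁺¹ := star (a : A⁺¹) * (a : A⁺¹) with hS
  have hPP : P * P = P := by rw [hP, ← Unitization.inr_mul, hp2]
  have hPsa : star P = P := by rw [hP, ← Unitization.inr_star, hp.star_eq]
  have hSnorm : ‖S‖ = N := by
    rw [hS, ← Unitization.inr_star, ← Unitization.inr_mul, Unitization.norm_inr]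
  have hPSP : P * S * P = S := by
    rw [hS, hP]
    simp only [← Unitization.inr_star, ← Unitization.inr_mul]
    congr 1
    have hps : p * star a = star a := by
      have := congrArg star hap
      rwa [star_mul, hp.star_eq] at this
    rw [show p * (star a * a) = star a * a from by rw [← mul_assoc, hps], mul_assoc, hap]
  -- 0 ≤ N • P - S
  have h1 : (0 : A⁺¹) ≤ N • P - S := by
    have hSsa : IsSelfAdjoint S := IsSelfAdjoint.star_mul_self _
    have := hSsa.le_algebraMap_norm_self
    rw [Algebra.algebraMap_eq_smul_one, hSnorm] at this
    have h2 : (0 : A⁺¹) ≤ star P * ((N • 1 - S)) * P := star_left_conjugate_nonneg (by rwa [sub_nonneg]) _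
    calc (0:A⁺¹) ≤ star P * (N • 1 - S) * P := h2
      _ = N • P - S := by
        rw [hPsa, mul_sub, sub_mul, mul_smul_comm, mul_one, smul_mul_assoc, hPP, hPSP]
  -- 0 ≤ P
  have hPnn : (0 : A⁺¹) ≤ P := by
    have := star_mul_self_nonneg P
    rwa [hPsa, hPP] at this
  -- 0 ≤ (k^2 - N) • P
  have h3 : (0 : A⁺¹) ≤ (k^2 - N) • P := by
    apply aux_smul_nonneg _ hPnn
    have : N.sqrt ^ 2 ≤ k ^ 2 := by
      apply pow_le_pow_left₀ (Real.sqrt_nonneg N); simp [hk]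
    rw [Real.sq_sqrt (norm_nonneg _)] at this
    linarith
  have h4 : (0 : A⁺¹) ≤ k • P - k⁻¹ • S := by
    have hsum : (0 : A⁺¹) ≤ (k^2 - N) • P + (N • P - S) := add_nonneg h3 h1
    have heq : k • P - k⁻¹ • S = k⁻¹ • ((k^2 - N) • P + (N • P - S)) := by
      match_scalars <;> field_simp <;> ring
    rw [heq]
    exact aux_smul_nonneg (by positivity) hsum
  -- conclude
  have hc : ((k • p - k⁻¹ • (star a * a) : A) : A⁺¹) = k • P - k⁻¹ • S := by
    simp only [Unitization.inr_sub, Unitization.inr_smul, hP, hS,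
      ← Unitization.inr_star, ← Unitization.inr_mul]
  rw [hc] at ht
  exact spectrum_nonneg_of_nonneg h4 ht

/-- Positivity in the C*-algebra `M₂(A)`: an element of a C*-algebra is positive
iff it is of the form `star y * y`. -/
def M2Pos (m : Matrix (Fin 2) (Fin 2) A) : Prop := ∃ y, m = star y * y

theorem stmt_6 (p : A) (hp : IsSelfAdjoint p) (hp2 : p * p = p) :
    {x : A | ∃ k : ℝ, 0 < k ∧ M2Pos !![k • p, x; star x, k • p]} =
      {y : A | ∃ x : A, y = p * x * p} := by
  ext x
  simp only [Set.mem_setOf_eq]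
  constructor
  · rintro ⟨k, hk, y, hy⟩
    have e : ∀ i j, (!![k • p, x; star x, k • p]) i j = (star y * y) i j := fun i j => by rw [hy]
    have e00 := e 0 0
    have e01 := e 0 1
    have e11 := e 1 1
    simp [Matrix.mul_apply, Fin.sum_univ_two, Matrix.star_apply] at e00 e01 e11
    have hy00 : y 0 0 * p = y 0 0 := aux_corner hp hp2 e00.symm
    have hy10 : y 1 0 * p = y 1 0 := aux_corner hp hp2 ((add_comm _ _).trans e00.symm)
    have hy01 : y 0 1 * p = y 0 1 := aux_corner hp hp2 e11.symm
    have hy11 : y 1 1 * p = y 1 1 := aux_corner hp hp2 ((add_comm _ _).trans e11.symm)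
    have hxp : x * p = x := by
      rw [e01, add_mul, mul_assoc, mul_assoc, hy01, hy11]
    have hpx : p * x = x := by
      have h1 : p * star (y 0 0) = star (y 0 0) := by
        have := congrArg star hy00; rwa [star_mul, hp.star_eq] at this
      have h2 : p * star (y 1 0) = star (y 1 0) := by
        have := congrArg star hy10; rwa [star_mul, hp.star_eq] at this
      rw [e01, mul_add, ← mul_assoc, ← mul_assoc, h1, h2]
    exact ⟨x, by rw [hpx, hxp]⟩
  · rintro ⟨z, rfl⟩
    set a : A := p * z * p with ha
    have hpa : p * a = a := by rw [ha, ← mul_assoc, ← mul_assoc, hp2]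
    have hap : a * p = a := by rw [ha, mul_assoc, mul_assoc, mul_assoc, hp2, ← mul_assoc]
    have hsap : star a * p = star a := by
      have := congrArg star hpa; rwa [star_mul, hp.star_eq] at this
    set N : ℝ := ‖star a * a‖ with hN
    set k : ℝ := N.sqrt + 1 with hk
    have hk0 : 0 < k := by positivity
    have hsk : Real.sqrt k * Real.sqrt k = k := Real.mul_self_sqrt hk0.le
    have hsknz : Real.sqrt k ≠ 0 := by positivity
    have hsk1 : Real.sqrt k * (Real.sqrt k)⁻¹ = 1 := mul_inv_cancel₀ hsknz
    have hsk1' : (Real.sqrt k)⁻¹ * Real.sqrt k = 1 := inv_mul_cancel₀ hsknz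
    have hski : (Real.sqrt k)⁻¹ * (Real.sqrt k)⁻¹ = k⁻¹ := by
      rw [← mul_inv, hsk]
    set c : A := k • p - k⁻¹ • (star a * a) with hc
    have hc_sa : IsSelfAdjoint c := by
      exact IsSelfAdjoint.sub (IsSelfAdjoint.smul (star_trivial k) hp)
        (IsSelfAdjoint.smul (star_trivial _) (IsSelfAdjoint.star_mul_self a))
    set w : A := cfcₙ Real.sqrt c with hw
    have hw_sa : IsSelfAdjoint w := by
      rw [hw]; exact cfcₙ_predicate Real.sqrt c
    have hww : w * w = c := by
      rw [hw, ← cfcₙ_mul Real.sqrt Real.sqrt c (by fun_prop) (by simp)]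
      have h1 : cfcₙ (fun t => Real.sqrt t * Real.sqrt t) c = cfcₙ (id : ℝ → ℝ) c := by
        apply cfcₙ_congr
        intro t ht
        exact Real.mul_self_sqrt (aux_qs hp hp2 hpa hap t ht)
      rw [h1, cfcₙ_id ℝ c]
    refine ⟨k, hk0, !![Real.sqrt k • p, (Real.sqrt k)⁻¹ • a; 0, w], ?_⟩
    have hstar : star (!![Real.sqrt k • p, (Real.sqrt k)⁻¹ • a; 0, w]) =
        !![Real.sqrt k • p, 0; (Real.sqrt k)⁻¹ • star a, star w] := by
      rw [Matrix.eta_fin_two (star _)]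
      simp [Matrix.star_apply, star_smul, hp.star_eq]
    rw [hstar, Matrix.mul_fin_two]
    have E00 : Real.sqrt k • p * (Real.sqrt k • p) + 0 * 0 = k • p := by
      simp only [smul_mul_assoc, mul_smul_comm, smul_smul, hsk, hp2, mul_zero, add_zero]
    have E01 : Real.sqrt k • p * ((Real.sqrt k)⁻¹ • a) + 0 * w = a := by
      simp only [smul_mul_assoc, mul_smul_comm, smul_smul, hpa, zero_mul, add_zero]
      rw [hsk1', one_smul]
    have E10 : (Real.sqrt k)⁻¹ • star a * (Real.sqrt k • p) + star w * 0 = star a := by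
      simp only [smul_mul_assoc, mul_smul_comm, smul_smul, hsap, mul_zero, add_zero]
      rw [hsk1, one_smul]
    have E11 : (Real.sqrt k)⁻¹ • star a * ((Real.sqrt k)⁻¹ • a) + star w * w = k • p := by
      rw [hw_sa.star_eq, hww, hc]
      simp only [smul_mul_assoc, mul_smul_comm, smul_smul, hski]
      abel
    rw [E00, E01, E10, E11]
end

section
/- Let A be a C*-algebra, a ∈ A positive with ‖a‖ = 1, and x ∈ A. If there exists k > 0 such that [[ka, x], [x*, ka]] is positive in M₂(A), then x*x ≤ k²·a. -/
variable {A : Type*} [NonUnitalCStarAlgebra A]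

variable [PartialOrder A] [StarOrderedRing A]

/-! If `[[p, x], [x*, q]]` is positive then compressing it by the column `(t x, -1)` gives
`0 ≤ t² x* p x - 2 t x* x + q`; bounding `x* p x ≤ ‖p‖ x* x` and taking `t = ‖p‖⁻¹` yields
`x* x ≤ ‖p‖ q`. For `p = q = k a` with `‖a‖ = 1` this is `x* x ≤ k² a`. -/

theorem Matrix.star_mul_self_compression_nonneg {R : Type*} [NonUnitalRing R] [StarRing R]
    [PartialOrder R] [StarOrderedRing R] (y : Matrix (Fin 2) (Fin 2) R) (z : R) :
    0 ≤ star z * (star y * y) 0 0 * z - star z * (star y * y) 0 1 - (star y * y) 1 0 * z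
      + (star y * y) 1 1 := by
  have hsum : star z * (star y * y) 0 0 * z - star z * (star y * y) 0 1 - (star y * y) 1 0 * z
      + (star y * y) 1 1 = star (y 0 0 * z - y 0 1) * (y 0 0 * z - y 0 1)
        + star (y 1 0 * z - y 1 1) * (y 1 0 * z - y 1 1) := by
    simp only [Matrix.mul_apply, Fin.sum_univ_two, Matrix.star_apply, star_sub, star_mul]
    noncomm_ring
  rw [hsum]
  exact add_nonneg (star_mul_self_nonneg _) (star_mul_self_nonneg _)

theorem M2Pos.star_mul_self_le_norm_smul {p q x : A} (h : M2Pos !![p, x; star x, q])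
    (hp : p ≠ 0) : star x * x ≤ ‖p‖ • q := by
  obtain ⟨y, hy⟩ := h
  have hp_sa : IsSelfAdjoint p := by
    show star p = p
    simpa [← hy] using (IsSelfAdjoint.star_mul_self y).isHermitian.apply 0 0
  have hnorm : 0 < ‖p‖ := norm_pos_iff.mpr hp
  set t := ‖p‖⁻¹
  have hcomp := Matrix.star_mul_self_compression_nonneg y (t • x)
  simp only [← hy, Matrix.of_apply, Matrix.cons_val', Matrix.cons_val_zero, Matrix.cons_val_one,
    Matrix.empty_val', Matrix.cons_val_fin_one] at hcomp
  have hconj : star (t • x) * p * (t • x) ≤ t • (star x * x) :=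
    calc star (t • x) * p * (t • x) = (t * t) • (star x * p * x) := by
          simp only [star_smul, star_trivial, smul_mul_assoc, mul_smul_comm, smul_smul]
      _ ≤ (t * t) • (‖p‖ • (star x * x)) :=
          smul_le_smul_of_nonneg_left (CStarAlgebra.star_left_conjugate_le_norm_smul hp_sa)
            (by positivity)
      _ = t • (star x * x) := by
          rw [smul_smul, mul_assoc, inv_mul_cancel₀ hnorm.ne', mul_one]
  have hcross : star (t • x) * x = t • (star x * x) ∧ star x * (t • x) = t • (star x * x) := by
    simp only [star_smul, star_trivial, smul_mul_assoc, mul_smul_comm, and_self]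
  have hq : t • (star x * x) ≤ q := by
    rw [hcross.1, hcross.2] at hcomp
    have := hcomp.trans (by gcongr : _ ≤ t • (star x * x) - t • (star x * x) - t • (star x * x) + q)
    rwa [sub_self, zero_sub, neg_add_eq_sub, sub_nonneg] at this
  calc star x * x = ‖p‖ • t • (star x * x) := by rw [smul_smul, mul_inv_cancel₀ hnorm.ne', one_smul]
    _ ≤ ‖p‖ • q := smul_le_smul_of_nonneg_left hq hnorm.le

theorem stmt_7_general (a x : A) (han : ‖a‖ = 1) (k : ℝ) (hk : 0 < k)
    (h : M2Pos !![k • a, x; star x, k • a]) :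
    star x * x ≤ (k ^ 2) • a := by
  have hnorm : ‖k • a‖ = k := by rw [norm_smul, han, Real.norm_of_nonneg hk.le, mul_one]
  have hka : k • a ≠ 0 := norm_ne_zero_iff.mp (by rw [hnorm]; exact hk.ne')
  calc star x * x ≤ ‖k • a‖ • (k • a) := h.star_mul_self_le_norm_smul hka
    _ = (k ^ 2) • a := by rw [hnorm, smul_smul, sq]

theorem stmt_7 (a x : A) (ha : 0 ≤ a) (han : ‖a‖ = 1) (k : ℝ) (hk : 0 < k)
    (h : M2Pos !![k • a, x; star x, k • a]) :
    star x * x ≤ (k ^ 2) • a :=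
  stmt_7_general a x han k hk h
end

section
/- Let A be a C*-algebra and a ∈ A⁺. Define A_a := {x ∈ A : ∃ k > 0, [[ka, x], [x*, ka]] ≥ 0 in M₂(A)}. If a has the order unit property in A, i.e., [[‖x‖·a, x], [x*, ‖x‖·a]] ≥ 0 in M₂(A) for every x ∈ A_a, then A_a is a norm-closed subset of A. -/
/-!
Under the order unit property, `x ∈ A_a` holds exactly when `[[‖x‖a, x], [x*, ‖x‖a]] ≥ 0`: for
`x ≠ 0` take `k = ‖x‖`, and `0 ∈ A_a` because `a ≥ 0`. So `A_a` is the preimage of the positive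
cone of `M₂(A)`, which is closed, under a continuous map.
-/

variable {A : Type*} [NonUnitalCStarAlgebra A]

variable [PartialOrder A] [StarOrderedRing A]

/- `B` carries no order of its own; its spectral order has the `star y * y` as nonnegative
elements. -/
theorem isClosed_setOf_eq_star_mul_self (B : Type*) [NonUnitalCStarAlgebra B] :
    IsClosed {p : B | ∃ y, p = star y * y} := by
  let _ := CStarAlgebra.spectralOrder B
  have _ := CStarAlgebra.spectralOrderedRing B
  simpa only [CStarAlgebra.nonneg_iff_eq_star_mul_self] using CStarAlgebra.isClosed_nonneg (A := B)

theorem isClosed_setOf_m2Pos : IsClosed {m : Matrix (Fin 2) (Fin 2) A | M2Pos m} :=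
  (isClosed_setOf_eq_star_mul_self (CStarMatrix (Fin 2) (Fin 2) A)).preimage
    CStarMatrix.ofMatrixL.continuous

theorem m2Pos_diagonal {a b : A} (ha : 0 ≤ a) (hb : 0 ≤ b) : M2Pos !![a, 0; 0, b] := by
  obtain ⟨c, rfl⟩ := CStarAlgebra.nonneg_iff_eq_star_mul_self.mp ha
  obtain ⟨d, rfl⟩ := CStarAlgebra.nonneg_iff_eq_star_mul_self.mp hb
  refine ⟨Matrix.diagonal ![c, d], ?_⟩
  rw [Matrix.star_eq_conjTranspose, Matrix.diagonal_conjTranspose, Matrix.diagonal_mul_diagonal,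
    Matrix.diagonal_fin_two]
  rfl

theorem continuous_norm_smul_block {B : Type*} [SeminormedAddCommGroup B] [NormedSpace ℝ B]
    [Star B] [ContinuousStar B] (a : B) :
    Continuous fun x : B => !![‖x‖ • a, x; star x, ‖x‖ • a] := by
  fun_prop

theorem stmt_8 (a : A) (ha : 0 ≤ a)
    (hou : ∀ x ∈ {x : A | ∃ k : ℝ, 0 < k ∧ M2Pos !![k • a, x; star x, k • a]},
      M2Pos !![‖x‖ • a, x; star x, ‖x‖ • a]) :
    IsClosed {x : A | ∃ k : ℝ, 0 < k ∧ M2Pos !![k • a, x; star x, k • a]} := by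
  have hpreimage : {x : A | ∃ k : ℝ, 0 < k ∧ M2Pos !![k • a, x; star x, k • a]} =
      (fun x : A => !![‖x‖ • a, x; star x, ‖x‖ • a]) ⁻¹' {m | M2Pos m} := by
    ext x
    refine ⟨hou x, fun hx => ?_⟩
    rcases eq_or_ne x 0 with rfl | hx0
    · exact ⟨1, one_pos, by simpa using m2Pos_diagonal ha ha⟩
    · exact ⟨‖x‖, norm_pos_iff.mpr hx0, hx⟩
  rw [hpreimage]
  exact isClosed_setOf_m2Pos.preimage (continuous_norm_smul_block a)
end

section
/- Let A be a C*-algebra and p ∈ A⁺ with ‖p‖ = 1. If p has the order unit property in A (for every x ∈ A such that [[kp, x], [x*, kp]] ≥ 0 in M₂(A) for some k > 0, one has [[‖x‖·p, x], [x*, ‖x‖·p]] ≥ 0), then p is a projection: p = p². -/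
/-!
If `p` is not a projection, its quasispectrum contains some `0 < l < 1`. For `k = 2 / l` the
element `x = min(1, k p)` (continuous functional calculus) satisfies `!![k p, x; x, k p] ≥ 0`,
since `|min(1, k t)| ≤ k t` pointwise, and `‖x‖ ≤ 1`. The order unit property then gives
`!![‖x‖ p, x; x, ‖x‖ p] ≥ 0`; compressing by `(p, -p)` yields `p (‖x‖ p - x) p ≥ 0`, which at the
spectral point `l` reads `1 = min(1, k l) ≤ ‖x‖ l ≤ l < 1`.
-/

variable {A : Type*} [NonUnitalCStarAlgebra A]

lemma m2Pos_of_isSelfAdjoint {a b : A} (ha : IsSelfAdjoint a) (hb : IsSelfAdjoint b) :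
    M2Pos !![a * a + b * b, a * b + b * a; a * b + b * a, a * a + b * b] := by
  have hy : star !![a, b; b, a] = !![a, b; b, a] := by
    ext i j
    fin_cases i <;> fin_cases j <;> simp [Matrix.star_apply, ha.star_eq, hb.star_eq]
  refine ⟨!![a, b; b, a], ?_⟩
  rw [hy, Matrix.mul_fin_two, add_comm (b * a), add_comm (b * b)]

lemma m2Pos_cfcₙ_of_abs_le {f g : ℝ → ℝ} {a : A}
    (hf : ContinuousOn f (quasispectrum ℝ a)) (hg : ContinuousOn g (quasispectrum ℝ a))
    (hf0 : f 0 = 0) (hg0 : g 0 = 0) (hfg : ∀ t ∈ quasispectrum ℝ a, |f t| ≤ g t) :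
    M2Pos !![cfcₙ g a, cfcₙ f a; cfcₙ f a, cfcₙ g a] := by
  -- `g ± f = (u ± v)²` on the quasispectrum, so `!![g, f; f, g] = !![u, v; v, u]²`.
  set u : ℝ → ℝ := fun t ↦ (√(g t + f t) + √(g t - f t)) / 2
  set v : ℝ → ℝ := fun t ↦ (√(g t + f t) - √(g t - f t)) / 2
  have hu : ContinuousOn u (quasispectrum ℝ a) := by fun_prop
  have hv : ContinuousOn v (quasispectrum ℝ a) := by fun_prop
  have hu0 : u 0 = 0 := by simp [u, hf0, hg0]
  have hv0 : v 0 = 0 := by simp [v, hf0, hg0]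
  have hsq : ∀ t ∈ quasispectrum ℝ a,
      √(g t + f t) ^ 2 = g t + f t ∧ √(g t - f t) ^ 2 = g t - f t := fun t ht ↦
    have := abs_le.mp (hfg t ht)
    ⟨Real.sq_sqrt (by linarith), Real.sq_sqrt (by linarith)⟩
  have hdiag : cfcₙ g a = cfcₙ u a * cfcₙ u a + cfcₙ v a * cfcₙ v a := by
    rw [← cfcₙ_mul u u a, ← cfcₙ_mul v v a, ← cfcₙ_add (fun t ↦ u t * u t) (fun t ↦ v t * v t) a]
    refine cfcₙ_congr fun t ht ↦ ?_
    obtain ⟨h₁, h₂⟩ := hsq t ht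
    simp only [u, v]
    nlinarith
  have hoff : cfcₙ f a = cfcₙ u a * cfcₙ v a + cfcₙ v a * cfcₙ u a := by
    rw [← cfcₙ_mul u v a, ← cfcₙ_mul v u a, ← cfcₙ_add (fun t ↦ u t * v t) (fun t ↦ v t * u t) a]
    refine cfcₙ_congr fun t ht ↦ ?_
    obtain ⟨h₁, h₂⟩ := hsq t ht
    simp only [u, v]
    nlinarith
  rw [hdiag, hoff]
  exact m2Pos_of_isSelfAdjoint (cfcₙ_predicate u a) (cfcₙ_predicate v a)

variable [PartialOrder A] [StarOrderedRing A]

lemma M2Pos.compression_nonneg {m : Matrix (Fin 2) (Fin 2) A} (hm : M2Pos m) (c d : A) :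
    0 ≤ star c * m 0 0 * c + star c * m 0 1 * d + star d * m 1 0 * c + star d * m 1 1 * d := by
  obtain ⟨y, rfl⟩ := hm
  calc (0 : A) ≤ star (y 0 0 * c + y 0 1 * d) * (y 0 0 * c + y 0 1 * d)
        + star (y 1 0 * c + y 1 1 * d) * (y 1 0 * c + y 1 1 * d) :=
        add_nonneg (star_mul_self_nonneg _) (star_mul_self_nonneg _)
    _ = _ := by
      simp only [Matrix.mul_apply, Matrix.star_apply, Fin.sum_univ_two, star_add, star_mul,
        mul_add, add_mul, mul_assoc]
      abel

lemma le_mul_of_m2Pos_cfcₙ {f : ℝ → ℝ} {a : A} (ha : IsSelfAdjoint a)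
    (hf : ContinuousOn f (quasispectrum ℝ a)) (hf0 : f 0 = 0) {c : ℝ}
    (h : M2Pos !![c • a, cfcₙ f a; cfcₙ f a, c • a]) {t : ℝ} (ht : t ∈ quasispectrum ℝ a)
    (ht0 : t ≠ 0) : f t ≤ c * t := by
  -- compressing by the column `(a, -a)` gives `2 a (c a - f(a)) a ≥ 0`
  have hcomp := h.compression_nonneg a (-a)
  set q : ℝ → ℝ := fun t ↦ t * (c * t - f t) * t
  have hq : cfcₙ q a = a * (c • a - cfcₙ f a) * a := by
    rw [cfcₙ_mul (fun t ↦ t * (c * t - f t)) (fun t ↦ t) a, cfcₙ_mul (fun t ↦ t) _ a,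
      cfcₙ_sub (fun t ↦ c * t) f a, cfcₙ_const_mul_id c a, cfcₙ_id' ℝ a]
  have hnonneg : 0 ≤ cfcₙ (fun t ↦ q t + q t) a := by
    rw [cfcₙ_add q q a, hq]
    convert hcomp using 1
    simp only [Matrix.of_apply, Matrix.cons_val', Matrix.cons_val_zero, Matrix.cons_val_one,
      Matrix.empty_val', Matrix.cons_val_fin_one, ha.star_eq, star_neg, mul_neg, neg_mul,
      neg_neg, mul_sub, sub_mul]
    abel
  have := (cfcₙ_nonneg_iff _ a).mp hnonneg t ht
  have ht2 : 0 < t * t := mul_self_pos.mpr ht0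
  simp only [q] at this
  nlinarith

lemma exists_mem_quasispectrum_pos_lt_one {p : A} (hp : 0 ≤ p) (hn : ‖p‖ ≤ 1)
    (hne : ¬ IsIdempotentElem p) : ∃ l ∈ quasispectrum ℝ p, 0 < l ∧ l < 1 := by
  rw [isIdempotentElem_iff_quasispectrum_subset ℝ p hp.isSelfAdjoint, Set.not_subset] at hne
  obtain ⟨l, hl, hl01⟩ := hne
  have hl_nonneg := quasispectrum_nonneg_of_nonneg p hp l hl
  have hl_le : l ≤ 1 := by
    have := norm_apply_le_norm_cfcₙ (fun t : ℝ ↦ t) p hl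
    rw [cfcₙ_id' ℝ p, Real.norm_eq_abs, abs_of_nonneg hl_nonneg] at this
    linarith
  simp only [Set.mem_insert_iff, Set.mem_singleton_iff, not_or] at hl01
  exact ⟨l, hl, lt_of_le_of_ne hl_nonneg (Ne.symm hl01.1), lt_of_le_of_ne hl_le hl01.2⟩

theorem stmt_10 (p : A) (hp : 0 ≤ p) (hn : ‖p‖ = 1)
    (hou : ∀ x ∈ {x : A | ∃ k : ℝ, 0 < k ∧ M2Pos !![k • p, x; star x, k • p]},
      M2Pos !![‖x‖ • p, x; star x, ‖x‖ • p]) :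
    p = p * p := by
  by_contra hne
  obtain ⟨l, hl, hl0, hl1⟩ :=
    exists_mem_quasispectrum_pos_lt_one hp hn.le fun h ↦ hne h.eq.symm
  set k := 2 / l
  set f : ℝ → ℝ := fun t ↦ min 1 (k * t)
  have hxs : star (cfcₙ f p) = cfcₙ f p := (cfcₙ_predicate f p).star_eq
  have hdom : M2Pos !![k • p, cfcₙ f p; cfcₙ f p, k • p] := by
    rw [← cfcₙ_const_mul_id k p hp.isSelfAdjoint]
    refine m2Pos_cfcₙ_of_abs_le (by fun_prop) (by fun_prop) (by simp [f]) (by simp)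
      fun t ht ↦ ?_
    have := quasispectrum_nonneg_of_nonneg p hp t ht
    rw [abs_of_nonneg (le_min zero_le_one (by positivity))]
    exact min_le_right _ _
  have hM := hou (cfcₙ f p) ⟨k, by positivity, by rwa [hxs]⟩
  rw [hxs] at hM
  have hfl : f l ≤ ‖cfcₙ f p‖ * l :=
    le_mul_of_m2Pos_cfcₙ hp.isSelfAdjoint (by fun_prop) (by simp [f]) hM hl hl0.ne'
  have hnorm : ‖cfcₙ f p‖ ≤ 1 := norm_cfcₙ_le fun t ht ↦ by
    have := quasispectrum_nonneg_of_nonneg p hp t ht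
    rw [Real.norm_eq_abs, abs_of_nonneg (le_min zero_le_one (by positivity))]
    exact min_le_left _ _
  have hf1 : f l = 1 := by simp [f, k, hl0.ne']
  nlinarith
end

section
/- Let A be a unital C*-algebra and let a = diag(1, 1/2) in M₂(ℂ). Then a is positive with ‖a‖ = 1, the identity I₂ satisfies [[ka, I₂], [I₂, ka]] ≥ 0 in M₂(M₂(ℂ)) for some k > 0 (indeed k = 2), but [[‖I₂‖·a, I₂], [I₂, ‖I₂‖·a]] = [[a, I₂], [I₂, a]] is not positive; hence a does not have the order unit property in M₂(ℂ). -/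
/-! Since `a = diag(1, 1/2)` is diagonal, positivity and the operator norm are read off its
entries. For a diagonal `D` with positive entries, the Schur complement of the block `D` in
`[[D, 1], [1, D]]` is `D - D⁻¹`, so this block matrix is positive exactly when every diagonal
entry `t` of `D` satisfies `t⁻¹ ≤ t`: true for `2a = diag(2, 1)`, false for `a` since `2 > 1/2`. -/

open ComplexOrder

namespace Matrix

variable {n K : Type*} [Fintype n] [DecidableEq n]
  [Field K] [PartialOrder K] [StarRing K] [StarOrderedRing K]

theorem posSemidef_fromBlocks_diagonal_one_one_diagonal_iff {d : n → K} (hd : ∀ i, 0 < d i) :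
    (fromBlocks (diagonal d) 1 1 (diagonal d)).PosSemidef ↔ ∀ i, (d i)⁻¹ ≤ d i := by
  have hpos : (diagonal d).PosDef := posDef_diagonal_iff.mpr hd
  let _ := hpos.isUnit.invertible
  have hinv : (diagonal d)⁻¹ = diagonal d⁻¹ := inv_eq_left_inv <| by
    rw [diagonal_mul_diagonal, ← diagonal_one]
    exact congrArg diagonal (funext fun i ↦ inv_mul_cancel₀ (hd i).ne')
  have schur := PosDef.fromBlocks₁₁ (1 : Matrix n n K) (diagonal d) hpos
  rw [conjTranspose_one, one_mul, mul_one, hinv, diagonal_sub, posSemidef_diagonal_iff] at schur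
  simpa only [Pi.sub_apply, Pi.inv_apply, sub_nonneg] using schur

open scoped Matrix.Norms.L2Operator in
theorem norm_toEuclideanCLM_diagonal {𝕜 : Type*} [RCLike 𝕜] (v : n → 𝕜) :
    ‖(toEuclideanCLM (𝕜 := 𝕜) (diagonal v) : EuclideanSpace 𝕜 n →L[𝕜] EuclideanSpace 𝕜 n)‖ =
      ‖v‖ := by
  rw [l2_opNorm_toEuclideanCLM, l2_opNorm_diagonal]

end Matrix

open Matrix in
theorem stmt_12 :
    let a : Matrix (Fin 2) (Fin 2) ℂ := !![1, 0; 0, 1/2]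
    a.PosSemidef ∧
    ‖(Matrix.toEuclideanCLM (𝕜 := ℂ) a :
        EuclideanSpace ℂ (Fin 2) →L[ℂ] EuclideanSpace ℂ (Fin 2))‖ = 1 ∧
    ‖(Matrix.toEuclideanCLM (𝕜 := ℂ) (1 : Matrix (Fin 2) (Fin 2) ℂ) :
        EuclideanSpace ℂ (Fin 2) →L[ℂ] EuclideanSpace ℂ (Fin 2))‖ = 1 ∧
    ((0 : ℝ) < 2 ∧ (Matrix.fromBlocks ((2 : ℝ) • a) 1 1 ((2 : ℝ) • a)).PosSemidef) ∧
    ¬ (Matrix.fromBlocks ((1 : ℝ) • a) 1 1 ((1 : ℝ) • a)).PosSemidef := by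
  intro a
  have ha : a = diagonal ![1, 1/2] := by simp [a, diagonal_fin_two]
  rw [ha]
  simp only [← diagonal_smul]
  refine ⟨posSemidef_diagonal_iff.mpr ?_, ?_, by simp, ⟨two_pos, ?_⟩, ?_⟩
  · simp [Fin.forall_fin_two, Complex.le_def]
  · simp [norm_toEuclideanCLM_diagonal, Pi.norm_def, Fin.univ_succ]
  all_goals
    rw [posSemidef_fromBlocks_diagonal_one_one_diagonal_iff
      (by simp [Fin.forall_fin_two, Complex.lt_def])]
    norm_num [Fin.forall_fin_two, Complex.le_def]
end

section
/- Let A be a C*-algebra, a ∈ A⁺, and let A_a := {x ∈ A : ∃ k > 0, [[ka, x], [x*, ka]] ≥ 0 in M₂(A)}. If v ∈ A⁺ and v ≤ w for some w ∈ A_a ∩ A⁺, then v ∈ A_a (i.e., A_a is an order ideal). -/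
/-!
Conjugating a positive matrix `!![b, x; star x, d]` by the column `(1, -1)` gives
`x + star x ≤ b + d`, so the hypothesis on `w` yields `v ≤ w ≤ 2w ≤ 2k a`.
Conversely, if `-c ≤ x ≤ c` with `x` self-adjoint, then `!![c, x; x, c] = star y * y` for
`y = 2^{-1/2} !![p, p; q, -q]`, where `star p * p = c + x` and `star q * q = c - x`;
take `x = v` and `c = 2k a`.
-/

variable {A : Type*} [NonUnitalCStarAlgebra A]

variable [PartialOrder A] [StarOrderedRing A]

theorem M2Pos.add_star_le {b d x : A} (h : M2Pos !![b, x; star x, d]) :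
    x + star x ≤ b + d := by
  obtain ⟨y, hy⟩ := h
  have entry : ∀ i j, !![b, x; star x, d] i j = star (y 0 i) * y 0 j + star (y 1 i) * y 1 j := by
    intro i j
    rw [hy]
    simp [Matrix.mul_apply, Matrix.star_apply, Fin.sum_univ_two]
  have hb : b = _ := entry 0 0
  have hx : x = _ := entry 0 1
  have hx' : star x = _ := entry 1 0
  have hd : d = _ := entry 1 1
  rw [← sub_nonneg]
  have hdiff : b + d - (x + star x) =
      star (y 0 0 - y 0 1) * (y 0 0 - y 0 1) + star (y 1 0 - y 1 1) * (y 1 0 - y 1 1) := by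
    rw [hx', hb, hx, hd]
    simp only [star_sub, sub_mul, mul_sub]
    abel
  rw [hdiff]
  exact add_nonneg (star_mul_self_nonneg _) (star_mul_self_nonneg _)

theorem m2Pos_of_sub_nonneg_of_add_nonneg {c x : A} (hx : IsSelfAdjoint x)
    (hsub : 0 ≤ c - x) (hadd : 0 ≤ c + x) : M2Pos !![c, x; star x, c] := by
  obtain ⟨p, hp⟩ := CStarAlgebra.nonneg_iff_eq_star_mul_self.mp hadd
  obtain ⟨q, hq⟩ := CStarAlgebra.nonneg_iff_eq_star_mul_self.mp hsub
  set s : ℝ := (Real.sqrt 2)⁻¹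
  have hss : s * s = 2⁻¹ := by
    rw [← mul_inv, Real.mul_self_sqrt zero_le_two]
  refine ⟨!![s • p, s • p; s • q, -(s • q)], ?_⟩
  ext i j
  fin_cases i <;> fin_cases j <;>
    simp only [hx.star_eq, Fin.zero_eta, Fin.mk_one, Fin.isValue, Matrix.of_apply,
      Matrix.cons_val', Matrix.cons_val_zero, Matrix.cons_val_one, Matrix.cons_val_fin_one,
      Matrix.mul_apply, Matrix.star_apply, Fin.sum_univ_two, star_smul, star_trivial,
      smul_mul_smul_comm, hss, star_neg, mul_neg, neg_mul, neg_neg] <;>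
    (rw [← hp, ← hq]; module)

theorem stmt_14_general (a : A) (v w : A) (hv : 0 ≤ v)
    (hwa : w ∈ {x : A | ∃ k : ℝ, 0 < k ∧ M2Pos !![k • a, x; star x, k • a]})
    (hvw : v ≤ w) :
    v ∈ {x : A | ∃ k : ℝ, 0 < k ∧ M2Pos !![k • a, x; star x, k • a]} := by
  obtain ⟨k, hk, hwk⟩ := hwa
  have hw : 0 ≤ w := hv.trans hvw
  have hva : v ≤ (2 * k) • a :=
    calc v ≤ w := hvw
      _ ≤ w + w := le_add_of_nonneg_right hw
      _ = w + star w := by rw [(IsSelfAdjoint.of_nonneg hw).star_eq]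
      _ ≤ k • a + k • a := hwk.add_star_le
      _ = (2 * k) • a := by rw [two_mul, add_smul]
  exact ⟨2 * k, by positivity, m2Pos_of_sub_nonneg_of_add_nonneg (IsSelfAdjoint.of_nonneg hv)
    (sub_nonneg.mpr hva) (add_nonneg (hv.trans hva) hv)⟩

theorem stmt_14 (a : A) (ha : 0 ≤ a) (v w : A) (hv : 0 ≤ v) (hw : 0 ≤ w)
    (hwa : w ∈ {x : A | ∃ k : ℝ, 0 < k ∧ M2Pos !![k • a, x; star x, k • a]})
    (hvw : v ≤ w) :
    v ∈ {x : A | ∃ k : ℝ, 0 < k ∧ M2Pos !![k • a, x; star x, k • a]} :=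
  stmt_14_general a v w hv hwa hvw
end

section
/- Let A be a C*-algebra and p, q ∈ A⁺ be two positive elements of norm 1 both having the order unit property in A with A_p = A_q. Then p = q. -/
variable {A : Type*} [NonUnitalCStarAlgebra A]

variable [PartialOrder A] [StarOrderedRing A]

/-- From positivity of `!![q, p; p, q]` we deduce `p ≤ q` (conjugate by `(1, -1)`). -/
theorem le_of_m2_aux (p q : A) (y : Matrix (Fin 2) (Fin 2) A)
    (hm : !![q, p; p, q] = star y * y) : p ≤ q := by
  have e : ∀ i j, (!![q, p; p, q] : Matrix (Fin 2) (Fin 2) A) i j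
      = star (y 0 i) * y 0 j + star (y 1 i) * y 1 j := by
    intro i j
    rw [hm]
    simp [Matrix.mul_apply, Fin.sum_univ_two, Matrix.star_apply]
  have e00 : q = star (y 0 0) * y 0 0 + star (y 1 0) * y 1 0 := by simpa using e 0 0
  have e01 : p = star (y 0 0) * y 0 1 + star (y 1 0) * y 1 1 := by simpa using e 0 1
  have e10 : p = star (y 0 1) * y 0 0 + star (y 1 1) * y 1 0 := by simpa using e 1 0
  have e11 : q = star (y 0 1) * y 0 1 + star (y 1 1) * y 1 1 := by simpa using e 1 1
  have key : star (y 0 0 - y 0 1) * (y 0 0 - y 0 1) + star (y 1 0 - y 1 1) * (y 1 0 - y 1 1)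
      = (q - p) + (q - p) := by
    have expand : star (y 0 0 - y 0 1) * (y 0 0 - y 0 1) + star (y 1 0 - y 1 1) * (y 1 0 - y 1 1)
        = (star (y 0 0) * y 0 0 + star (y 1 0) * y 1 0)
          + (star (y 0 1) * y 0 1 + star (y 1 1) * y 1 1)
          - (star (y 0 0) * y 0 1 + star (y 1 0) * y 1 1)
          - (star (y 0 1) * y 0 0 + star (y 1 1) * y 1 0) := by
      simp only [star_sub]
      noncomm_ring
    rw [expand, ← e00, ← e11, ← e01, ← e10]
    abel
  have h2 : (0:A) ≤ (q - p) + (q - p) := by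
    rw [← key]
    exact add_nonneg (star_mul_self_nonneg _) (star_mul_self_nonneg _)
  have h3 : (0:A) ≤ q - p := by
    have h4 := smul_nonneg (by norm_num : (0:ℝ) ≤ 2⁻¹) h2
    rw [show (q - p) + (q - p) = (2:ℝ) • (q - p) from (two_smul ℝ _).symm, smul_smul] at h4
    simpa using h4
  exact sub_nonneg.mp h3

/-- Every positive element belongs to its own set `A_p`. -/
theorem mem_self_aux (p : A) (hp : 0 ≤ p) :
    p ∈ {x : A | ∃ k : ℝ, 0 < k ∧ M2Pos !![k • p, x; star x, k • p]} := by
  refine ⟨1, one_pos, !![CFC.sqrt p, CFC.sqrt p; 0, 0], ?_⟩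
  have hs : star (CFC.sqrt p) = CFC.sqrt p := (CFC.sqrt_nonneg (a := p)).isSelfAdjoint.star_eq
  have hss : CFC.sqrt p * CFC.sqrt p = p := CFC.sqrt_mul_sqrt_self p hp
  ext i j
  fin_cases i <;> fin_cases j <;>
    simp [Matrix.mul_apply, Fin.sum_univ_two, Matrix.star_apply, hs, hss, hp.star_eq]

theorem stmt_18 (p q : A) (hp : 0 ≤ p) (hq : 0 ≤ q) (hnp : ‖p‖ = 1) (hnq : ‖q‖ = 1)
    (houp : ∀ x ∈ {x : A | ∃ k : ℝ, 0 < k ∧ M2Pos !![k • p, x; star x, k • p]},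
      M2Pos !![‖x‖ • p, x; star x, ‖x‖ • p])
    (houq : ∀ x ∈ {x : A | ∃ k : ℝ, 0 < k ∧ M2Pos !![k • q, x; star x, k • q]},
      M2Pos !![‖x‖ • q, x; star x, ‖x‖ • q])
    (heq : {x : A | ∃ k : ℝ, 0 < k ∧ M2Pos !![k • p, x; star x, k • p]} =
      {x : A | ∃ k : ℝ, 0 < k ∧ M2Pos !![k • q, x; star x, k • q]}) :
    p = q := by
  -- p is in A_p = A_q, so `!![q, p; p, q]` is positive, giving p ≤ q.
  have hpq : p ≤ q := by
    have hmem : p ∈ {x : A | ∃ k : ℝ, 0 < k ∧ M2Pos !![k • q, x; star x, k • q]} := by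
      rw [← heq]; exact mem_self_aux p hp
    obtain ⟨y, hy⟩ := houq p hmem
    rw [hnp, one_smul, hp.star_eq] at hy
    exact le_of_m2_aux p q y hy
  have hqp : q ≤ p := by
    have hmem : q ∈ {x : A | ∃ k : ℝ, 0 < k ∧ M2Pos !![k • p, x; star x, k • p]} := by
      rw [heq]; exact mem_self_aux q hq
    obtain ⟨y, hy⟩ := houp q hmem
    rw [hnq, one_smul, hq.star_eq] at hy
    exact le_of_m2_aux q p y hy
  exact le_antisymm hpq hqp
end
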